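/- If H is an induced subgraph of the Tyshkevich composition G₁ ∘ G₀ (of a split graph G₁ with fixed KS-partition and a graph G₀), then H equals the composition H₁ ∘ H₀, where H₁ and H₀ are the subgraphs of H induced by V(H) ∩ V(G₁) and V(H) ∩ V(G₀) respectively, with H₁ given the KS-partition inherited from G₁. -/

import Mathlib

/-- A set of vertices is independent if no two of its vertices are adjacent. -/
def IsIndep {V : Type} (G : SimpleGraph V) (S : Set V) : Prop :=
  S.Pairwise fun a b => ¬ G.Adj a b

/-- `K ∪ S` is a KS-partition of `G`: the vertex set is partitioned into a clique `K`
and an independent set `S`. -/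
def IsKSPart {V : Type} (G : SimpleGraph V) (K S : Set V) : Prop :=
  (∀ v, v ∈ K ∨ v ∈ S) ∧ (∀ v, ¬(v ∈ K ∧ v ∈ S)) ∧ G.IsClique K ∧ IsIndep G S

/-- A split graph: the vertices can be partitioned into a clique and an independent set. -/
def IsSplit {V : Type} (G : SimpleGraph V) : Prop :=
  ∃ K S : Set V, IsKSPart G K S

/-- The Tyshkevich composition of a split graph `G1` (with clique part `K`) with a graph `G0`:
disjoint union of `G1` and `G0` plus all edges between `K` and `G0`. -/
def tcomp {V1 V0 : Type} (G1 : SimpleGraph V1) (K : Set V1) (G0 : SimpleGraph V0) :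
    SimpleGraph (V1 ⊕ V0) where
  Adj x y :=
    match x, y with
    | Sum.inl a, Sum.inl b => G1.Adj a b
    | Sum.inl a, Sum.inr _ => a ∈ K
    | Sum.inr _, Sum.inl b => b ∈ K
    | Sum.inr a, Sum.inr b => G0.Adj a b
  symm := ⟨by
    rintro (a | a) (b | b) h
    · exact G1.adj_symm h
    · exact h
    · exact h
    · exact G0.adj_symm h⟩
  loopless := ⟨by
    rintro (a | a) h
    · exact G1.irrefl h
    · exact G0.irrefl h⟩

def tcompInduceIso {V1 V0 : Type} (G1 : SimpleGraph V1) (K : Set V1) (G0 : SimpleGraph V0)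
    (W : Set (V1 ⊕ V0)) :
    (tcomp G1 K G0).induce W ≃g
      tcomp (G1.induce (Sum.inl ⁻¹' W)) {a : ↥(Sum.inl ⁻¹' W) | (a : V1) ∈ K}
        (G0.induce (Sum.inr ⁻¹' W)) where
  toEquiv := Equiv.subtypeSum
  map_rel_iff' := by rintro ⟨a | a, _⟩ ⟨b | b, _⟩ <;> rfl

theorem stmt9_general {V1 V0 : Type} (G1 : SimpleGraph V1) (K : Set V1) (G0 : SimpleGraph V0)
    (W : Set (V1 ⊕ V0)) :
    Nonempty
      (((tcomp G1 K G0).induce W) ≃g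
        tcomp (G1.induce (Sum.inl ⁻¹' W)) {a : ↥(Sum.inl ⁻¹' W) | (a : V1) ∈ K}
          (G0.induce (Sum.inr ⁻¹' W))) :=
  ⟨tcompInduceIso G1 K G0 W⟩

/-- An induced subgraph of a Tyshkevich composition is the composition of the corresponding
induced subgraphs, with the inherited KS-partition. -/
theorem stmt9 {V1 V0 : Type} (G1 : SimpleGraph V1) (K S : Set V1) (G0 : SimpleGraph V0)
    (hKS : IsKSPart G1 K S) (W : Set (V1 ⊕ V0)) :
    Nonempty
      (((tcomp G1 K G0).induce W) ≃g
        tcomp (G1.induce (Sum.inl ⁻¹' W)) {a : ↥(Sum.inl ⁻¹' W) | (a : V1) ∈ K}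
          (G0.induce (Sum.inr ⁻¹' W))) :=
  stmt9_general G1 K G0 W
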